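/- Matrix-power refinement: let M be a real symmetric n×n matrix and suppose a coloring c: [n]×[n] → S refines M⁰ = I, M itself, and M^d for some d ≥ 0 (i.e., c(i,j) = c(p,q) implies I_{ij} = I_{pq}, M_{ij} = M_{pq} and (M^d)_{ij} = (M^d)_{pq}). If additionally the coloring satisfies the multiset-2-FWL consistency condition, namely that c(i,j) = c(p,q) implies the multiset {{ {{c(u,j), c(i,u)}} : u ∈ [n] }} equals the multiset {{ {{c(u,q), c(p,u)}} : u ∈ [n] }}, then c also refines M^{d+1}: c(i,j) = c(p,q) implies (M^{d+1})_{ij} = (M^{d+1})_{pq}. -/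
import Mathlib


open Matrix BigOperators

/-- A coloring of index pairs refines a matrix: equally colored pairs have equal entries. -/
def Refines {n : ℕ} {S : Type*} (c : Fin n → Fin n → S)
    (A : Matrix (Fin n) (Fin n) ℝ) : Prop :=
  ∀ i j p q, c i j = c p q → A i j = A p q

theorem multiset_fwl2_refines_next_matrix_power
    {n : ℕ} {S : Type*} (M : Matrix (Fin n) (Fin n) ℝ) (hM : Mᵀ = M)
    (c : Fin n → Fin n → S) (d : ℕ)
    (hId : Refines c (1 : Matrix (Fin n) (Fin n) ℝ))
    (hMd : Refines c (M ^ d))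
    (hM1 : Refines c M)
    (hfwl : ∀ i j p q, c i j = c p q →
      (Finset.univ.val.map fun u => ({c u j, c i u} : Multiset S)) =
      (Finset.univ.val.map fun u => ({c u q, c p u} : Multiset S))) :
    Refines c (M ^ (d + 1)) := by
  classical
  intro i j p q hc
  have hMdT : (M ^ d)ᵀ = M ^ d := by rw [Matrix.transpose_pow, hM]
  have hMd1T : (M ^ (d+1))ᵀ = M ^ (d+1) := by rw [Matrix.transpose_pow, hM]
  set h1 : S → ℝ := fun s =>
    if h : ∃ pr : Fin n × Fin n, c pr.1 pr.2 = s then (M ^ d) h.choose.1 h.choose.2 else 0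
    with hh1
  set h2 : S → ℝ := fun s =>
    if h : ∃ pr : Fin n × Fin n, c pr.1 pr.2 = s then M h.choose.1 h.choose.2 else 0
    with hh2
  have h1spec : ∀ a b, h1 (c a b) = (M ^ d) a b := by
    intro a b
    have hex : ∃ pr : Fin n × Fin n, c pr.1 pr.2 = c a b := ⟨(a, b), rfl⟩
    simp only [hh1, dif_pos hex]
    exact hMd _ _ _ _ hex.choose_spec
  have h2spec : ∀ a b, h2 (c a b) = M a b := by
    intro a b
    have hex : ∃ pr : Fin n × Fin n, c pr.1 pr.2 = c a b := ⟨(a, b), rfl⟩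
    simp only [hh2, dif_pos hex]
    exact hM1 _ _ _ _ hex.choose_spec
  set g : Multiset S → ℝ := fun m =>
    (m.map h1).sum * (m.map h2).sum - (m.map (fun x => h1 x * h2 x)).sum with hg
  have key : ∀ a b : Fin n,
      ((Finset.univ.val.map fun u => ({c u b, c a u} : Multiset S)).map g).sum
        = 2 * (M ^ (d + 1)) a b := by
    intro a b
    rw [Multiset.map_map]
    have hfun : ∀ u : Fin n, (g ∘ fun u => ({c u b, c a u} : Multiset S)) u
        = (M ^ d) u b * M a u + (M ^ d) a u * M u b := by
      intro u
      simp only [Function.comp, hg, Multiset.insert_eq_cons, Multiset.map_cons,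
        Multiset.map_singleton, Multiset.sum_cons, Multiset.sum_singleton,
        h1spec, h2spec]
      ring
    have hsum : ((Finset.univ.val.map (g ∘ fun u => ({c u b, c a u} : Multiset S)))).sum
        = ∑ u : Fin n, ((M ^ d) u b * M a u + (M ^ d) a u * M u b) := by
      rw [show ((Finset.univ.val.map (g ∘ fun u => ({c u b, c a u} : Multiset S)))).sum
          = ∑ u : Fin n, (g ∘ fun u => ({c u b, c a u} : Multiset S)) u from rfl]
      exact Finset.sum_congr rfl fun u _ => hfun u
    rw [hsum, Finset.sum_add_distrib]
    have e1 : ∑ u : Fin n, (M ^ d) a u * M u b = (M ^ (d+1)) a b := by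
      rw [pow_succ, Matrix.mul_apply]
    have sM : ∀ x y, M x y = M y x := fun x y => by
      conv_lhs => rw [← hM, Matrix.transpose_apply]
    have sMd : ∀ x y, (M ^ d) x y = (M ^ d) y x := fun x y => by
      conv_lhs => rw [← hMdT, Matrix.transpose_apply]
    have sMd1 : ∀ x y, (M ^ (d+1)) x y = (M ^ (d+1)) y x := fun x y => by
      conv_lhs => rw [← hMd1T, Matrix.transpose_apply]
    have e2 : ∑ u : Fin n, (M ^ d) u b * M a u = (M ^ (d+1)) a b := by
      have key2 : ∀ u : Fin n, (M ^ d) u b * M a u = (M ^ d) b u * M u a := by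
        intro u
        rw [sM a u, sMd u b, mul_comm]
      rw [Finset.sum_congr rfl fun u _ => key2 u]
      rw [show ∑ u : Fin n, (M ^ d) b u * M u a = (M ^ (d+1)) b a from by
        rw [pow_succ, Matrix.mul_apply]]
      exact sMd1 b a
    rw [e1, e2]; ring
  have h2eq := hfwl i j p q hc
  have := key i j
  rw [h2eq, key p q] at this
  linarith
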